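/- arXiv:2106.06037 — 4 statements merged into one kernel-verified Lean document; each statement's English description precedes it below -/
import Mathlib

section
/- Let M be any non-crossing matching of strings X and Y, and let num(X^M), num(Y^M) be obtained by masking the matched characters with dummies and enumerating the dummies. Then ed(X,Y) ≤ ed(num(X^M), num(Y^M)). -/
open Classical

universe u

variable {α : Type u}

/-- The `x`-th character (1-indexed) of a string, as an `Option`. -/
def chr (X : List α) (x : ℕ) : Option α := X[x - 1]?

/-- `A` is an alignment of `X` and `Y`: a monotone lattice path from `(1,1)` to
`(|X|+1, |Y|+1)` with steps `(+1,+1)`, `(+1,0)`, `(0,+1)`. -/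
def IsAlignment (X Y : List α) (A : List (ℕ × ℕ)) : Prop :=
  A ≠ [] ∧ A.head? = some (1, 1) ∧ A.getLast? = some (X.length + 1, Y.length + 1) ∧
  A.Chain' (fun p q => q = (p.1 + 1, p.2 + 1) ∨ q = (p.1 + 1, p.2) ∨ q = (p.1, p.2 + 1))

/-- The cost of one step of an alignment: a diagonal step on equal characters is free,
every other step (a deletion or a substitution) costs one. -/
noncomputable def stepCost (X Y : List α) (p q : ℕ × ℕ) : ℕ :=
  if q = (p.1 + 1, p.2 + 1) ∧ chr X p.1 = chr Y p.2 then 0 else 1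

/-- The cost of an alignment: the number of deleted or substituted characters. -/
noncomputable def alignCost (X Y : List α) (A : List (ℕ × ℕ)) : ℕ :=
  ((A.zip A.tail).map (fun pq => stepCost X Y pq.1 pq.2)).sum

/-- The set of matches of an alignment `A`: elements `(x,y)` followed by a diagonal step
with `X[x] = Y[y]`. -/
def Matches (X Y : List α) (A : List (ℕ × ℕ)) : Set (ℕ × ℕ) :=
  {p | ∃ t, A[t]? = some p ∧ A[t + 1]? = some (p.1 + 1, p.2 + 1) ∧
       p.1 ≤ X.length ∧ p.2 ≤ Y.length ∧ chr X p.1 = chr Y p.2}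

/-- The breakpoints of an alignment: its elements that are not matches. -/
def Breakpoints (X Y : List α) (A : List (ℕ × ℕ)) : Set (ℕ × ℕ) :=
  {p | p ∈ A ∧ p ∉ Matches X Y A}

/-- An alignment is greedy if at every breakpoint `(x,y)` with `x ≤ |X|`, `y ≤ |Y|`,
the characters `X[x]` and `Y[y]` differ. -/
def IsGreedy (X Y : List α) (A : List (ℕ × ℕ)) : Prop :=
  ∀ p ∈ Breakpoints X Y A, p.1 ≤ X.length → p.2 ≤ Y.length → chr X p.1 ≠ chr Y p.2

/-- The edit distance: the minimum cost of an alignment of `X` and `Y`. -/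
noncomputable def ed (X Y : List α) : ℕ :=
  sInf (alignCost X Y '' {A | IsAlignment X Y A})

/-- `GA k X Y`: the set of greedy alignments of `X, Y` of cost at most `k`. -/
def GA (k : ℕ) (X Y : List α) : Set (List (ℕ × ℕ)) :=
  {A | IsAlignment X Y A ∧ IsGreedy X Y A ∧ alignCost X Y A ≤ k}

/-- `commonMatches k X Y` (the set `M_k(X,Y)`): the matches common to all greedy
alignments of cost at most `k`. -/
def commonMatches (k : ℕ) (X Y : List α) : Set (ℕ × ℕ) :=
  ⋂ A ∈ GA k X Y, Matches X Y A

/-- `M` is a non-crossing matching of `X, Y`: all pairs `(x,y) ∈ M` are in range,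
have `X[x] = Y[y]`, and no two distinct pairs `(x,y), (x',y')` satisfy `x ≤ x'` and
`y ≥ y'`. -/
def IsNonCrossingMatching (X Y : List α) (M : Set (ℕ × ℕ)) : Prop :=
  (∀ p ∈ M, 1 ≤ p.1 ∧ p.1 ≤ X.length ∧ 1 ≤ p.2 ∧ p.2 ≤ Y.length ∧ chr X p.1 = chr Y p.2) ∧
  ∀ p ∈ M, ∀ q ∈ M, p ≠ q → p.1 ≤ q.1 → p.2 < q.2

/-- Mask the positions in `S` (1-indexed) of `X` with enumerated dummy symbols:
this realizes `num(X^M)`. -/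
noncomputable def numMask (X : List α) (S : Set ℕ) : List (α ⊕ ℕ) :=
  X.mapIdx (fun i a =>
    if (i + 1) ∈ S then Sum.inr ((Finset.range i).filter (fun j => (j + 1) ∈ S)).card
    else Sum.inl a)

/-! Masking only separates characters: two masked strings agree at a pair of positions only
if both carry the same original character, or both carry the same dummy `#_k`. In the
latter case both positions are the `k`-th masked position of their string, and since `M`
is non-crossing, `M` pairs the `k`-th masked position of `X` with the `k`-th one of `Y`;
so the original characters agree there as well. Hence every alignment of the masked
strings is an alignment of `X` and `Y` of no larger cost. -/

lemma Nat.sInf_image_le_sInf_image {γ : Type*} {f g : γ → ℕ} {s : Set γ}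
    (h : ∀ a ∈ s, f a ≤ g a) : sInf (f '' s) ≤ sInf (g '' s) := by
  rcases s.eq_empty_or_nonempty with rfl | hs
  · simp
  · refine le_csInf (hs.image g) ?_
    rintro _ ⟨a, ha, rfl⟩
    exact (Nat.sInf_le (Set.mem_image_of_mem f ha)).trans (h a ha)

section EditDistance

variable {β : Type*} {X Y : List α} {X' Y' : List β}

lemma isAlignment_iff_of_length_eq (hX : X'.length = X.length) (hY : Y'.length = Y.length)
    (A : List (ℕ × ℕ)) :
    IsAlignment X' Y' A ↔ IsAlignment X Y A := by
  rw [IsAlignment, IsAlignment, hX, hY]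

lemma stepCost_le_stepCost (h : ∀ i j, chr X' i = chr Y' j → chr X i = chr Y j)
    (p q : ℕ × ℕ) :
    stepCost X Y p q ≤ stepCost X' Y' p q := by
  unfold stepCost
  by_cases hq : q = (p.1 + 1, p.2 + 1) ∧ chr X' p.1 = chr Y' p.2
  · rw [if_pos hq, if_pos ⟨hq.1, h _ _ hq.2⟩]
  · rw [if_neg hq]
    split_ifs <;> omega

lemma alignCost_le_alignCost (h : ∀ i j, chr X' i = chr Y' j → chr X i = chr Y j)
    (A : List (ℕ × ℕ)) :
    alignCost X Y A ≤ alignCost X' Y' A :=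
  List.sum_le_sum fun pq _ => stepCost_le_stepCost h pq.1 pq.2

lemma ed_le_ed_of_chr_eq_imp (hX : X'.length = X.length) (hY : Y'.length = Y.length)
    (h : ∀ i j, chr X' i = chr Y' j → chr X i = chr Y j) : ed X Y ≤ ed X' Y' := by
  have hA : {A | IsAlignment X' Y' A} = {A | IsAlignment X Y A} :=
    Set.ext (isAlignment_iff_of_length_eq hX hY)
  rw [ed, ed, hA]
  exact Nat.sInf_image_le_sInf_image fun A _ => alignCost_le_alignCost h A

end EditDistance

section NumMask

/-- If position `n + 1` is masked, `num` replaces it by the dummy `#_(dummyIndex S n)`. -/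
noncomputable def dummyIndex (S : Set ℕ) (n : ℕ) : ℕ :=
  ((Finset.range n).filter (fun j => j + 1 ∈ S)).card

lemma numMask_length (X : List α) (S : Set ℕ) : (numMask X S).length = X.length := by
  simp [numMask]

lemma getElem?_numMask (X : List α) (S : Set ℕ) (i : ℕ) :
    (numMask X S)[i]? =
      X[i]?.map (fun a => if i + 1 ∈ S then .inr (dummyIndex S i) else .inl a) := by
  simp [numMask, dummyIndex, List.getElem?_mapIdx]

lemma dummyIndex_lt_dummyIndex {S : Set ℕ} {m n : ℕ} (hm : m + 1 ∈ S) (hmn : m < n) :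
    dummyIndex S m < dummyIndex S n := by
  have hsub : (Finset.range m).filter (fun j => j + 1 ∈ S) ⊆
      (Finset.range n).filter (fun j => j + 1 ∈ S) :=
    Finset.filter_subset_filter _ (Finset.range_subset_range.mpr hmn.le)
  refine Finset.card_lt_card ((Finset.ssubset_iff_of_subset hsub).mpr ⟨m, ?_, ?_⟩) <;>
    simp [hm, hmn]

lemma dummyIndex_injOn (S : Set ℕ) : Set.InjOn (dummyIndex S) {n | n + 1 ∈ S} := by
  intro m hm n hn h
  rcases lt_trichotomy m n with hlt | rfl | hgt
  · exact absurd h (dummyIndex_lt_dummyIndex hm hlt).ne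
  · rfl
  · exact absurd h (dummyIndex_lt_dummyIndex hn hgt).ne'

end NumMask

namespace IsNonCrossingMatching

variable {X Y : List α} {M : Set (ℕ × ℕ)}

lemma fst_lt_fst_iff (hM : IsNonCrossingMatching X Y M) {p q : ℕ × ℕ} (hp : p ∈ M)
    (hq : q ∈ M) : p.1 < q.1 ↔ p.2 < q.2 := by
  constructor
  · intro hlt
    exact hM.2 p hp q hq (fun h => hlt.ne (congrArg Prod.fst h)) hlt.le
  · intro hlt
    by_contra hle
    have := hM.2 q hq p hp (fun h => hlt.ne' (congrArg Prod.snd h)) (not_lt.mp hle)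
    omega

lemma swap (hM : IsNonCrossingMatching X Y M) :
    IsNonCrossingMatching Y X (Prod.swap ⁻¹' M) := by
  refine ⟨fun p hp => ?_, fun p hp q hq hne hle => ?_⟩
  · obtain ⟨h1, hX, h2, hY, hchr⟩ := hM.1 _ hp
    exact ⟨h2, hY, h1, hX, hchr.symm⟩
  · by_contra hge
    have := hM.2 _ hq _ hp (Prod.swap_injective.ne hne.symm) (not_lt.mp hge)
    exact absurd hle (not_le.mpr this)

lemma dummyIndex_le (hM : IsNonCrossingMatching X Y M) {x y : ℕ} (hxy : (x + 1, y + 1) ∈ M) :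
    dummyIndex {x | ∃ y, (x, y) ∈ M} x ≤ dummyIndex {y | ∃ x, (x, y) ∈ M} y := by
  -- `M` maps the matched positions left of `x + 1` injectively to those left of `y + 1`.
  refine Finset.card_le_card_of_forall_subsingleton (fun j k => (j + 1, k + 1) ∈ M) ?_ ?_
  · intro j hj
    obtain ⟨hjx, y', hjy'⟩ : j < x ∧ ∃ y', (j + 1, y') ∈ M := by simpa using hj
    obtain ⟨k, rfl⟩ : ∃ k, y' = k + 1 :=
      ⟨y' - 1, (Nat.sub_add_cancel (hM.1 _ hjy').2.2.1).symm⟩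
    have hk : k < y := by simpa using (hM.fst_lt_fst_iff hjy' hxy).mp (by simpa using hjx)
    exact ⟨k, by simpa using ⟨hk, j + 1, hjy'⟩, hjy'⟩
  · intro k _ j hj j' hj'
    have h := hM.fst_lt_fst_iff hj.2 hj'.2
    have h' := hM.fst_lt_fst_iff hj'.2 hj.2
    simp only [lt_self_iff_false, iff_false] at h h'
    omega

lemma dummyIndex_eq (hM : IsNonCrossingMatching X Y M) {x y : ℕ} (hxy : (x + 1, y + 1) ∈ M) :
    dummyIndex {x | ∃ y, (x, y) ∈ M} x = dummyIndex {y | ∃ x, (x, y) ∈ M} y :=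
  le_antisymm (hM.dummyIndex_le hxy) (hM.swap.dummyIndex_le hxy)

lemma mem_of_dummyIndex_eq (hM : IsNonCrossingMatching X Y M) {x y : ℕ}
    (hx : x + 1 ∈ {x | ∃ y, (x, y) ∈ M}) (hy : y + 1 ∈ {y | ∃ x, (x, y) ∈ M})
    (h : dummyIndex {x | ∃ y, (x, y) ∈ M} x = dummyIndex {y | ∃ x, (x, y) ∈ M} y) :
    (x + 1, y + 1) ∈ M := by
  obtain ⟨y₀, hy₀⟩ := hx
  obtain ⟨y₀, rfl⟩ : ∃ y', y₀ = y' + 1 :=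
    ⟨y₀ - 1, (Nat.sub_add_cancel (hM.1 _ hy₀).2.2.1).symm⟩
  have hy₀' : y₀ + 1 ∈ {y | ∃ x, (x, y) ∈ M} := ⟨x + 1, hy₀⟩
  have : y₀ = y := dummyIndex_injOn _ hy₀' hy ((hM.dummyIndex_eq hy₀).symm.trans h)
  exact this ▸ hy₀

lemma getElem?_eq_of_getElem?_numMask_eq (hM : IsNonCrossingMatching X Y M) {i j : ℕ}
    (h : (numMask X {x | ∃ y, (x, y) ∈ M})[i]? = (numMask Y {y | ∃ x, (x, y) ∈ M})[j]?) :
    X[i]? = Y[j]? := by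
  rw [getElem?_numMask, getElem?_numMask] at h
  rcases hXi : X[i]? with _ | a <;> rcases hYj : Y[j]? with _ | b <;>
    simp only [hXi, hYj, Option.map_none, Option.map_some, reduceCtorEq,
      Option.some.injEq] at h ⊢
  split_ifs at h with hi hj hj
  · have hchr := (hM.1 _ (hM.mem_of_dummyIndex_eq hi hj (Sum.inr.inj h))).2.2.2.2
    simpa [chr, hXi, hYj] using hchr
  · exact Sum.inl.inj h

lemma chr_eq_of_chr_numMask_eq (hM : IsNonCrossingMatching X Y M) {i j : ℕ}
    (h : chr (numMask X {x | ∃ y, (x, y) ∈ M}) i =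
      chr (numMask Y {y | ∃ x, (x, y) ∈ M}) j) :
    chr X i = chr Y j :=
  hM.getElem?_eq_of_getElem?_numMask_eq h

end IsNonCrossingMatching

/-- For any non-crossing matching `M` of `X` and `Y`,
`ed(X,Y) ≤ ed(num(X^M), num(Y^M))`. -/
theorem ed_le_ed_numMask (X Y : List α) (M : Set (ℕ × ℕ))
    (hM : IsNonCrossingMatching X Y M) :
    ed X Y ≤ ed (numMask X {x | ∃ y, (x, y) ∈ M}) (numMask Y {y | ∃ x, (x, y) ∈ M}) :=
  ed_le_ed_of_chr_eq_imp (numMask_length _ _) (numMask_length _ _)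
    fun _ _ => hM.chr_eq_of_chr_numMask_eq
end

section
/- Consider strings X, Y, Z and k ≥ 0. Every greedy alignment A of X and Z with cost at most k is the product of some greedy alignment of X and Y with cost at most d and some greedy alignment of Y and Z with cost at most d, where d = 2·cost(A) + ed(X,Y) (in particular d ≤ 2k + ed(X,Y)). -/
open Classical

universe u

variable {α : Type u}

/-- `AXZ` is a product of `AXY` and `AYZ` (with middle string of length `Ylen`): every
element `(x,z)` of `AXZ` factors through some `y ∈ [1..Ylen+1]` with `(x,y) ∈ AXY` and
`(y,z) ∈ AYZ`. -/
def IsProductOf (Ylen : ℕ) (AXZ AXY AYZ : List (ℕ × ℕ)) : Prop :=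
  ∀ p ∈ AXZ, ∃ y, 1 ≤ y ∧ y ≤ Ylen + 1 ∧ (p.1, y) ∈ AXY ∧ (y, p.2) ∈ AYZ

/-!
Induct on `|X| + |Y| + |Z|`. Each round advances the three strings by a triple
`(a, b, c) ∈ {0,1}³`, where `(a, c)` is the first step of `A` (or `(0, 0)`, leaving `A` in
place), and prepends the steps `(a, b)` and `(b, c)` to factors of the remainder. Both factors
stay greedy as long as `b = a` whenever `X` and `Y` start with the same character and `b = c`
whenever `Y` and `Z` do; as `A` is greedy, its first step is a free match whenever `X` and `Z`
start alike, so the two demands never conflict. The budget `2·cost(A) + ed(X, Y)` pays for the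
new steps: a costly step of `A` releases 2, while removing first characters raises `ed` by at
most 1; at a free step of `A` whose character `Y` does not share, `b` follows the first step of
an optimal alignment of `X` and `Y`, which lowers `ed(X, Y)` by 1.
-/

theorem chr_drop (X : List α) (d : ℕ) {i : ℕ} (hi : 1 ≤ i) :
    chr (X.drop d) i = chr X (i + d) := by
  simp only [chr, List.getElem?_drop]
  congr 1
  omega

theorem chr_one_eq_none_iff {X : List α} : chr X 1 = none ↔ X = [] := by
  cases X <;> simp [chr]

theorem le_length_of_chr_one_eq {X Y : List α} {a : ℕ} (ha : a ≤ 1) (hX : a ≤ X.length)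
    (h : chr X 1 = chr Y 1) : a ≤ Y.length := by
  rcases X with _ | ⟨x, X⟩ <;> rcases Y with _ | ⟨y, Y⟩ <;> simp [chr] at h hX ⊢ <;> omega

def IsStep (d : ℕ × ℕ) : Prop := d = (1, 1) ∨ d = (1, 0) ∨ d = (0, 1)

theorem IsStep.le_one {d : ℕ × ℕ} (hd : IsStep d) : d.1 ≤ 1 ∧ d.2 ≤ 1 := by
  rcases hd with rfl | rfl | rfl <;> simp

theorem IsStep.pos {d : ℕ × ℕ} (hd : IsStep d) : 0 < d.1 + d.2 := by
  rcases hd with rfl | rfl | rfl <;> simp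

theorem IsStep.add_ne_one_one {d : ℕ × ℕ} (hd : IsStep d) {r : ℕ × ℕ} (hr : (1, 1) ≤ r) :
    r + d ≠ (1, 1) := by
  obtain ⟨h1, h2⟩ := Prod.mk_le_mk.1 hr
  have := hd.pos
  simp only [ne_eq, Prod.ext_iff, Prod.fst_add, Prod.snd_add]
  omega

theorem isStep_of_le_one {a b : ℕ} (ha : a ≤ 1) (hb : b ≤ 1) (hab : 0 < a + b) :
    IsStep (a, b) := by
  unfold IsStep
  interval_cases a <;> interval_cases b <;> simp_all

def LatticeStep (p q : ℕ × ℕ) : Prop := ∃ d, IsStep d ∧ q = p + d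

theorem latticeStep_add_add_iff {p q d : ℕ × ℕ} :
    LatticeStep (p + d) (q + d) ↔ LatticeStep p q := by
  simp only [LatticeStep, add_right_comm p d, add_left_inj]

theorem isChain_latticeStep_map_add_iff {C : List (ℕ × ℕ)} {d : ℕ × ℕ} :
    (C.map (· + d)).IsChain LatticeStep ↔ C.IsChain LatticeStep := by
  simp only [List.isChain_map, latticeStep_add_add_iff]

theorem isAlignment_iff {X Y : List α} {A : List (ℕ × ℕ)} :
    IsAlignment X Y A ↔ A.head? = some (1, 1) ∧
      A.getLast? = some (X.length + 1, Y.length + 1) ∧ A.IsChain LatticeStep := by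
  have hstep : LatticeStep =
      fun p q => q = (p.1 + 1, p.2 + 1) ∨ q = (p.1 + 1, p.2) ∨ q = (p.1, p.2 + 1) := by
    ext p q
    simp only [LatticeStep, IsStep, or_and_right, exists_or, exists_eq_left]
    rfl
  rw [hstep]
  exact ⟨fun h => h.2, fun h => ⟨by rintro rfl; simp at h, h⟩⟩

theorem isAlignment_nil_nil : IsAlignment ([] : List α) [] [(1, 1)] :=
  isAlignment_iff.2 ⟨rfl, rfl, List.isChain_singleton _⟩

namespace IsAlignment

variable {X Y : List α} {A : List (ℕ × ℕ)}

theorem exists_eq_cons (hA : IsAlignment X Y A) : ∃ T, A = (1, 1) :: T :=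
  List.head?_eq_some_iff.1 (isAlignment_iff.1 hA).1

theorem one_one_mem (hA : IsAlignment X Y A) : ((1, 1) : ℕ × ℕ) ∈ A := by
  obtain ⟨T, rfl⟩ := hA.exists_eq_cons
  exact List.mem_cons_self

theorem pairwise_le (hA : IsAlignment X Y A) : A.Pairwise (· ≤ ·) := by
  refine List.isChain_iff_pairwise.1 ((isAlignment_iff.1 hA).2.2.imp ?_)
  rintro p _ ⟨d, -, rfl⟩
  exact le_self_add

theorem one_le_of_mem (hA : IsAlignment X Y A) {p : ℕ × ℕ} (hp : p ∈ A) : (1, 1) ≤ p := by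
  obtain ⟨T, rfl⟩ := hA.exists_eq_cons
  rcases List.mem_cons.1 hp with rfl | hp
  · exact le_rfl
  · exact List.rel_of_pairwise_cons hA.pairwise_le hp

theorem le_of_mem (hA : IsAlignment X Y A) {p : ℕ × ℕ} (hp : p ∈ A) :
    p ≤ (X.length + 1, Y.length + 1) := by
  obtain ⟨T, rfl⟩ := List.getLast?_eq_some_iff.1 (isAlignment_iff.1 hA).2.1
  rcases List.mem_append.1 hp with hp | hp
  · exact (List.pairwise_append.1 hA.pairwise_le).2.2 p hp _ (List.mem_singleton_self _)
  · exact (List.mem_singleton.1 hp).le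

end IsAlignment

/-- The alignment that takes the step `d` first and then follows `C`, an alignment of the
suffixes `X.drop d.1` and `Y.drop d.2`, translated by `d`. -/
def consStep (d : ℕ × ℕ) (C : List (ℕ × ℕ)) : List (ℕ × ℕ) := (1, 1) :: C.map (· + d)

section consStep

variable {X Y X' Y' : List α} {d : ℕ × ℕ} {C : List (ℕ × ℕ)}

theorem mem_consStep {p : ℕ × ℕ} : p ∈ consStep d C ↔ p = (1, 1) ∨ ∃ r ∈ C, r + d = p := by
  simp [consStep]

theorem isAlignment_consStep (hd : IsStep d) (hX : d.1 ≤ X.length) (hY : d.2 ≤ Y.length)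
    (hC : IsAlignment (X.drop d.1) (Y.drop d.2) C) : IsAlignment X Y (consStep d C) := by
  obtain ⟨-, hlast, hchain⟩ := isAlignment_iff.1 hC
  obtain ⟨T, rfl⟩ := hC.exists_eq_cons
  refine isAlignment_iff.2 ⟨rfl, ?_, ?_⟩
  · rw [consStep, List.getLast?_cons, List.getLast?_map, hlast]
    simp only [Option.map_some, Option.getD_some, Option.some_inj, Prod.ext_iff, Prod.fst_add,
      Prod.snd_add, List.length_drop]
    omega
  · rw [consStep, List.map_cons, List.isChain_cons_cons, ← List.map_cons (f := (· + d)),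
      isChain_latticeStep_map_add_iff]
    exact ⟨⟨d, hd, rfl⟩, hchain⟩

theorem IsAlignment.eq_nil_or_eq_consStep {A : List (ℕ × ℕ)} (hA : IsAlignment X Y A) :
    (X = [] ∧ Y = [] ∧ A = [(1, 1)]) ∨ ∃ d C, IsStep d ∧ d.1 ≤ X.length ∧ d.2 ≤ Y.length ∧
      IsAlignment (X.drop d.1) (Y.drop d.2) C ∧ A = consStep d C := by
  obtain ⟨-, hlast, hchain⟩ := isAlignment_iff.1 hA
  obtain ⟨T, rfl⟩ := hA.exists_eq_cons
  rcases T with _ | ⟨q, T⟩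
  · simp only [List.getLast?_singleton, Option.some_inj, Prod.ext_iff] at hlast
    exact Or.inl ⟨List.eq_nil_of_length_eq_zero (by omega),
      List.eq_nil_of_length_eq_zero (by omega), rfl⟩
  right
  obtain ⟨d, hd, rfl⟩ := (List.isChain_cons_cons.1 hchain).1
  have hge : ∀ r ∈ ((1, 1) + d) :: T, d ≤ r := by
    intro r hr
    refine (le_add_self : d ≤ (1, 1) + d).trans ?_
    rcases List.mem_cons.1 hr with rfl | hr
    · exact le_rfl
    · exact List.rel_of_pairwise_cons (List.pairwise_cons.1 hA.pairwise_le).2 hr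
  have hend := hA.le_of_mem (List.mem_cons_of_mem _ (List.mem_cons_self ..))
  simp only [Prod.le_def, Prod.fst_add, Prod.snd_add] at hend
  have hsub : ((((1, 1) + d) :: T).map (· - d)).map (· + d) = ((1, 1) + d) :: T := by
    rw [List.map_map]
    exact (List.map_congr_left fun r hr => tsub_add_cancel_of_le (hge r hr)).trans (List.map_id _)
  refine ⟨d, (((1, 1) + d) :: T).map (· - d), hd, by omega, by omega, ?_,
    by rw [consStep, hsub]⟩
  refine isAlignment_iff.2 ⟨by simp, ?_, ?_⟩
  · rw [List.getLast?_map, ← List.getLast?_cons_cons, hlast]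
    simp only [Option.map_some, Option.some_inj, Prod.ext_iff, Prod.fst_sub, Prod.snd_sub,
      List.length_drop]
    omega
  · rw [← isChain_latticeStep_map_add_iff (d := d), hsub]
    exact (List.isChain_cons_cons.1 hchain).2

theorem stepCost_le_one (X Y : List α) (p q : ℕ × ℕ) : stepCost X Y p q ≤ 1 := by
  unfold stepCost
  split <;> omega

theorem stepCost_of_ne {p q : ℕ × ℕ} (h : q ≠ (p.1 + 1, p.2 + 1)) : stepCost X Y p q = 1 := by
  simp [stepCost, h]

theorem stepCost_add {p q : ℕ × ℕ} (hp : (1, 1) ≤ p) :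
    stepCost X Y (p + d) (q + d) = stepCost (X.drop d.1) (Y.drop d.2) p q := by
  obtain ⟨h1, h2⟩ := Prod.le_def.1 hp
  simp only [stepCost, Prod.fst_add, Prod.snd_add, chr_drop _ _ h1, chr_drop _ _ h2,
    Prod.ext_iff, add_right_comm _ d.1 1, add_right_comm _ d.2 1, add_left_inj]

theorem alignCost_map_add (hC : ∀ r ∈ C, (1, 1) ≤ r) :
    alignCost X Y (C.map (· + d)) = alignCost (X.drop d.1) (Y.drop d.2) C := by
  rw [alignCost, alignCost, ← List.map_tail, List.zip_map, List.map_map]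
  congr 1
  refine List.map_congr_left fun pq hpq => ?_
  exact stepCost_add (hC _ (List.of_mem_zip hpq).1)

theorem alignCost_consStep (hC : IsAlignment X' Y' C) :
    alignCost X Y (consStep d C) =
      stepCost X Y (1, 1) ((1, 1) + d) + alignCost (X.drop d.1) (Y.drop d.2) C := by
  rw [← alignCost_map_add fun r => hC.one_le_of_mem]
  obtain ⟨T, rfl⟩ := hC.exists_eq_cons
  simp [consStep, alignCost]

theorem add_mem_matches_consStep_iff (hd : IsStep d) {r : ℕ × ℕ} (hr : (1, 1) ≤ r) :
    r + d ∈ Matches X Y (consStep d C) ↔ r ∈ Matches (X.drop d.1) (Y.drop d.2) C := by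
  obtain ⟨h1, h2⟩ := Prod.le_def.1 hr
  have hmap : ∀ {o : Option (ℕ × ℕ)} {r : ℕ × ℕ}, o.map (· + d) = some (r + d) ↔ o = some r :=
    by
    intro o r
    cases o <;> simp
  have hnext : (r.1 + d.1 + 1, r.2 + d.2 + 1) = (r.1 + 1, r.2 + 1) + d := by
    ext <;> simp only [Prod.fst_add, Prod.snd_add] <;> omega
  simp only [Matches, Set.mem_ofPred_eq, Prod.fst_add, Prod.snd_add, hnext, List.length_drop,
    chr_drop _ _ h1, chr_drop _ _ h2]
  constructor
  · rintro ⟨_ | t, ht, hnext, hx, hy, hchr⟩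
    · simp only [consStep, List.getElem?_cons_zero, Option.some_inj] at ht
      exact absurd ht.symm (hd.add_ne_one_one hr)
    · simp only [consStep, List.getElem?_cons_succ, List.getElem?_map, hmap] at ht hnext
      exact ⟨t, ht, hnext, by omega, by omega, hchr⟩
  · rintro ⟨t, ht, hnext, hx, hy, hchr⟩
    refine ⟨t + 1, ?_, ?_, by omega, by omega, hchr⟩ <;>
      simp only [consStep, List.getElem?_cons_succ, List.getElem?_map, hmap, ht, hnext]

theorem one_one_mem_matches_consStep_iff (hd : IsStep d) (hC : IsAlignment X' Y' C) :
    (1, 1) ∈ Matches X Y (consStep d C) ↔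
      d = (1, 1) ∧ 1 ≤ X.length ∧ 1 ≤ Y.length ∧ chr X 1 = chr Y 1 := by
  obtain ⟨T, rfl⟩ := hC.exists_eq_cons
  simp only [Matches, Set.mem_ofPred_eq]
  constructor
  · rintro ⟨_ | t, ht, hnext, hx, hy, hchr⟩
    · simp only [consStep, List.getElem?_cons_succ, List.getElem?_map, List.getElem?_cons_zero,
        Option.map_some, Option.some_inj, Prod.ext_iff, Prod.fst_add, Prod.snd_add] at hnext
      exact ⟨Prod.ext (by omega) (by omega), hx, hy, hchr⟩
    · simp only [consStep, List.getElem?_cons_succ, List.getElem?_map,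
        Option.map_eq_some_iff] at ht
      obtain ⟨r, hr, hrd⟩ := ht
      exact absurd hrd (hd.add_ne_one_one (hC.one_le_of_mem (List.mem_of_getElem? hr)))
  · rintro ⟨rfl, hx, hy, hchr⟩
    exact ⟨0, rfl, rfl, hx, hy, hchr⟩

theorem isGreedy_consStep_iff (hd : IsStep d) (hX : d.1 ≤ X.length) (hY : d.2 ≤ Y.length)
    (hC : IsAlignment (X.drop d.1) (Y.drop d.2) C) :
    IsGreedy X Y (consStep d C) ↔
      IsGreedy (X.drop d.1) (Y.drop d.2) C ∧ (chr X 1 = chr Y 1 → d = (1, 1)) := by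
  have hnonempty : chr X 1 = chr Y 1 → 1 ≤ X.length ∧ 1 ≤ Y.length := by
    intro h
    have := hd.pos
    by_cases h1 : 1 ≤ d.1
    · exact ⟨by omega, le_length_of_chr_one_eq le_rfl (by omega) h⟩
    · exact ⟨le_length_of_chr_one_eq le_rfl (by omega) h.symm, by omega⟩
  have hshift : ∀ r ∈ C, (r + d ∉ Matches X Y (consStep d C) → (r + d).1 ≤ X.length →
      (r + d).2 ≤ Y.length → chr X (r + d).1 ≠ chr Y (r + d).2) ↔
      (r ∉ Matches (X.drop d.1) (Y.drop d.2) C → r.1 ≤ (X.drop d.1).length →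
        r.2 ≤ (Y.drop d.2).length → chr (X.drop d.1) r.1 ≠ chr (Y.drop d.2) r.2) := by
    intro r hr
    have hr1 := hC.one_le_of_mem hr
    obtain ⟨h1, h2⟩ := Prod.le_def.1 hr1
    rw [add_mem_matches_consStep_iff hd hr1, chr_drop _ _ h1, chr_drop _ _ h2,
      List.length_drop, List.length_drop, Prod.fst_add, Prod.snd_add]
    constructor <;> intro h hm hx hy <;> exact h hm (by omega) (by omega)
  simp only [IsGreedy, Breakpoints, Set.mem_ofPred_eq, and_imp, mem_consStep, or_imp,
    forall_and, forall_eq, forall_exists_index]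
  constructor
  · rintro ⟨hhead, hshifted⟩
    refine ⟨fun r hr => (hshift r hr).1 (hshifted _ r hr rfl), fun h => ?_⟩
    by_contra hne
    exact hhead (fun hm => hne ((one_one_mem_matches_consStep_iff hd hC).1 hm).1)
      (hnonempty h).1 (hnonempty h).2 h
  · rintro ⟨hg, hhead⟩
    refine ⟨fun hm hx hy h => hm ((one_one_mem_matches_consStep_iff hd hC).2
      ⟨hhead h, hx, hy, h⟩), ?_⟩
    rintro _ r hr rfl
    exact (hshift r hr).2 (hg r hr)

end consStep

section EditDistance

variable {X Y : List α}

theorem exists_isAlignment (X Y : List α) : ∃ A, IsAlignment X Y A := by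
  induction X with
  | nil =>
    induction Y with
    | nil => exact ⟨_, isAlignment_nil_nil⟩
    | cons y Y ih =>
      obtain ⟨A, hA⟩ := ih
      exact ⟨_, isAlignment_consStep (d := (0, 1)) (Or.inr (Or.inr rfl)) (Nat.zero_le _)
        (by simp) hA⟩
  | cons x X ih =>
    obtain ⟨A, hA⟩ := ih
    exact ⟨_, isAlignment_consStep (d := (1, 0)) (Or.inr (Or.inl rfl)) (by simp)
      (Nat.zero_le _) hA⟩

theorem ed_le_alignCost {A : List (ℕ × ℕ)} (hA : IsAlignment X Y A) :
    ed X Y ≤ alignCost X Y A :=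
  Nat.sInf_le ⟨A, hA, rfl⟩

theorem exists_alignCost_eq_ed (X Y : List α) :
    ∃ A, IsAlignment X Y A ∧ alignCost X Y A = ed X Y := by
  obtain ⟨A, hA⟩ := exists_isAlignment X Y
  exact Nat.sInf_mem (s := alignCost X Y '' {A | IsAlignment X Y A}) ⟨_, A, hA, rfl⟩

theorem ed_le_stepCost_add_ed {d : ℕ × ℕ} (hd : IsStep d) (hX : d.1 ≤ X.length)
    (hY : d.2 ≤ Y.length) :
    ed X Y ≤ stepCost X Y (1, 1) ((1, 1) + d) + ed (X.drop d.1) (Y.drop d.2) := by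
  obtain ⟨C, hC, hcost⟩ := exists_alignCost_eq_ed (X.drop d.1) (Y.drop d.2)
  rw [← hcost, ← alignCost_consStep hC]
  exact ed_le_alignCost (isAlignment_consStep hd hX hY hC)

theorem exists_stepCost_add_ed_le (h : X ≠ [] ∨ Y ≠ []) :
    ∃ d, IsStep d ∧ d.1 ≤ X.length ∧ d.2 ≤ Y.length ∧
      stepCost X Y (1, 1) ((1, 1) + d) + ed (X.drop d.1) (Y.drop d.2) ≤ ed X Y := by
  obtain ⟨A, hA, hcost⟩ := exists_alignCost_eq_ed X Y
  rcases hA.eq_nil_or_eq_consStep with ⟨rfl, rfl, -⟩ | ⟨d, C, hd, hX, hY, hC, rfl⟩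
  · simp at h
  · refine ⟨d, hd, hX, hY, ?_⟩
    rw [← hcost, alignCost_consStep hC]
    exact Nat.add_le_add_left (ed_le_alignCost hC) _

theorem exists_ed_drop_add_one_le (h : chr X 1 ≠ chr Y 1) :
    ∃ d, IsStep d ∧ d.1 ≤ X.length ∧ d.2 ≤ Y.length ∧
      ed (X.drop d.1) (Y.drop d.2) + 1 ≤ ed X Y := by
  have hne : X ≠ [] ∨ Y ≠ [] := by
    by_contra! hnil
    obtain ⟨rfl, rfl⟩ := hnil
    exact h rfl
  obtain ⟨d, hd, hX, hY, hle⟩ := exists_stepCost_add_ed_le hne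
  rw [show stepCost X Y (1, 1) ((1, 1) + d) = 1 by simp [stepCost, h]] at hle
  exact ⟨d, hd, hX, hY, by omega⟩

theorem ed_le_ed_cons_left_add_one (x : α) (X Y : List α) : ed X Y ≤ ed (x :: X) Y + 1 := by
  induction Y with
  | nil =>
    obtain ⟨d, hd, -, hY, hle⟩ := exists_stepCost_add_ed_le (X := x :: X) (Y := [])
      (Or.inl (List.cons_ne_nil _ _))
    rcases hd with rfl | rfl | rfl <;> simp at hY hle
    omega
  | cons y Y ih =>
    obtain ⟨d, hd, -, -, hle⟩ := exists_stepCost_add_ed_le (X := x :: X) (Y := y :: Y)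
      (Or.inl (List.cons_ne_nil _ _))
    have hins := ed_le_stepCost_add_ed (X := X) (Y := y :: Y) (d := (0, 1))
      (Or.inr (Or.inr rfl)) (Nat.zero_le _) (by simp)
    have := stepCost_le_one X (y :: Y) (1, 1) ((1, 1) + (0, 1))
    rcases hd with rfl | rfl | rfl <;> simp [stepCost_of_ne] at hle hins ⊢ <;> omega

theorem ed_le_ed_cons_right_add_one (y : α) (X Y : List α) : ed X Y ≤ ed X (y :: Y) + 1 := by
  induction X with
  | nil =>
    obtain ⟨d, hd, hX, -, hle⟩ := exists_stepCost_add_ed_le (X := []) (Y := y :: Y)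
      (Or.inr (List.cons_ne_nil _ _))
    rcases hd with rfl | rfl | rfl <;> simp at hX hle
    omega
  | cons x X ih =>
    obtain ⟨d, hd, -, -, hle⟩ := exists_stepCost_add_ed_le (X := x :: X) (Y := y :: Y)
      (Or.inl (List.cons_ne_nil _ _))
    have hins := ed_le_stepCost_add_ed (X := x :: X) (Y := Y) (d := (1, 0))
      (Or.inr (Or.inl rfl)) (by simp) (Nat.zero_le _)
    have := stepCost_le_one (x :: X) Y (1, 1) ((1, 1) + (1, 0))
    rcases hd with rfl | rfl | rfl <;> simp [stepCost_of_ne] at hle hins ⊢ <;> omega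

theorem ed_le_ed_cons_cons (x y : α) (X Y : List α) : ed X Y ≤ ed (x :: X) (y :: Y) := by
  obtain ⟨d, hd, -, -, hle⟩ := exists_stepCost_add_ed_le (X := x :: X) (Y := y :: Y)
    (Or.inl (List.cons_ne_nil _ _))
  have := ed_le_ed_cons_left_add_one x X Y
  have := ed_le_ed_cons_right_add_one y X Y
  rcases hd with rfl | rfl | rfl <;> simp [stepCost_of_ne] at hle <;> omega

theorem ed_drop_drop_le_add_one {a b : ℕ} (ha : a ≤ 1) (hb : b ≤ 1) :
    ed (X.drop a) (Y.drop b) ≤ ed X Y + 1 := by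
  interval_cases a <;> interval_cases b <;> rcases X with _ | ⟨x, X⟩ <;>
    rcases Y with _ | ⟨y, Y⟩ <;>
    simp only [List.drop_zero, List.drop_nil, List.drop_succ_cons, le_add_iff_nonneg_right,
      zero_le, ed_le_ed_cons_left_add_one, ed_le_ed_cons_right_add_one]
  exact (ed_le_ed_cons_cons x y X Y).trans (Nat.le_succ _)

end EditDistance

section Factorization

variable {X Y Z : List α}

theorem GA_mono {K M : ℕ} (h : K ≤ M) : GA K X Y ⊆ GA M X Y :=
  fun _ hA => ⟨hA.1, hA.2.1, hA.2.2.trans h⟩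

def HasGreedyFactors (M : ℕ) (X Y Z : List α) (A : List (ℕ × ℕ)) : Prop :=
  ∃ AXY ∈ GA M X Y, ∃ AYZ ∈ GA M Y Z, IsProductOf Y.length A AXY AYZ

theorem hasGreedyFactors_nil {M : ℕ} {A : List (ℕ × ℕ)}
    (hA : IsAlignment ([] : List α) [] A) : HasGreedyFactors M ([] : List α) [] [] A := by
  have hGA : [(1, 1)] ∈ GA M ([] : List α) [] :=
    ⟨isAlignment_nil_nil, fun p hp h1 _ => by simp_all [List.mem_singleton.1 hp.1],
      by simp [alignCost]⟩
  refine ⟨_, hGA, _, hGA, fun p hp => ⟨1, le_rfl, le_rfl, ?_⟩⟩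
  obtain rfl : p = (1, 1) := le_antisymm (hA.le_of_mem hp) (hA.one_le_of_mem hp)
  simp

theorem exists_greedy_extension {K a b : ℕ} {B : List (ℕ × ℕ)} (ha : a ≤ 1) (hb : b ≤ 1)
    (hX : a ≤ X.length) (hY : b ≤ Y.length) (hchr : chr X 1 = chr Y 1 → a = b)
    (hB : B ∈ GA K (X.drop a) (Y.drop b)) :
    ∃ B' ∈ GA (stepCost X Y (1, 1) (1 + a, 1 + b) + K) X Y,
      (1, 1) ∈ B' ∧ ∀ p ∈ B, p + (a, b) ∈ B' := by
  obtain ⟨hBal, hBg, hBc⟩ := hB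
  by_cases h0 : a = 0 ∧ b = 0
  · obtain ⟨rfl, rfl⟩ := h0
    refine ⟨B, ⟨hBal, hBg, le_add_left hBc⟩, hBal.one_one_mem, fun p hp => ?_⟩
    rwa [Prod.mk_zero_zero, add_zero]
  have hd : IsStep (a, b) := isStep_of_le_one ha hb (by omega)
  have hdiag : chr X 1 = chr Y 1 → (a, b) = (1, 1) := fun h => by
    have := hchr h
    ext <;> dsimp only <;> omega
  refine ⟨consStep (a, b) B, ⟨isAlignment_consStep hd hX hY hBal,
    (isGreedy_consStep_iff hd hX hY hBal).2 ⟨hBg, hdiag⟩, ?_⟩, List.mem_cons_self,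
    fun p hp => mem_consStep.2 (Or.inr ⟨p, hp, rfl⟩)⟩
  rw [alignCost_consStep hBal, Prod.mk_add_mk]
  exact Nat.add_le_add_left hBc _

/-- One round of the induction: advancing by `(a, b, c)` in `X, Y, Z` reduces factoring `A` to
factoring `A'`, an alignment of the suffixes (`A` itself when `a = c = 0`), within the budget. -/
structure IsFactorStep (X Y Z : List α) (A : List (ℕ × ℕ)) (a b c : ℕ)
    (A' : List (ℕ × ℕ)) : Prop where
  a_le_one : a ≤ 1
  b_le_one : b ≤ 1
  c_le_one : c ≤ 1
  pos : 0 < a + b + c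
  a_le : a ≤ X.length
  b_le : b ≤ Y.length
  c_le : c ≤ Z.length
  mem : ∀ p ∈ A, p = (1, 1) ∨ ∃ r ∈ A', r + (a, c) = p
  isAlignment : IsAlignment (X.drop a) (Z.drop c) A'
  isGreedy : IsGreedy (X.drop a) (Z.drop c) A'
  chr_left : chr X 1 = chr Y 1 → a = b
  chr_right : chr Y 1 = chr Z 1 → b = c
  cost_left : stepCost X Y (1, 1) (1 + a, 1 + b) +
    (2 * alignCost (X.drop a) (Z.drop c) A' + ed (X.drop a) (Y.drop b)) ≤
      2 * alignCost X Z A + ed X Y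
  cost_right : stepCost Y Z (1, 1) (1 + b, 1 + c) +
    (2 * alignCost (X.drop a) (Z.drop c) A' + ed (X.drop a) (Y.drop b)) ≤
      2 * alignCost X Z A + ed X Y

theorem IsFactorStep.hasGreedyFactors {A A' : List (ℕ × ℕ)} {a b c : ℕ}
    (h : IsFactorStep X Y Z A a b c A')
    (hA' : HasGreedyFactors (2 * alignCost (X.drop a) (Z.drop c) A' + ed (X.drop a) (Y.drop b))
      (X.drop a) (Y.drop b) (Z.drop c) A') :
    HasGreedyFactors (2 * alignCost X Z A + ed X Y) X Y Z A := by
  obtain ⟨B₁, hB₁, B₂, hB₂, hprod⟩ := hA'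
  obtain ⟨B₁', hB₁', h₁, hmem₁⟩ :=
    exists_greedy_extension h.a_le_one h.b_le_one h.a_le h.b_le h.chr_left hB₁
  obtain ⟨B₂', hB₂', h₂, hmem₂⟩ :=
    exists_greedy_extension h.b_le_one h.c_le_one h.b_le h.c_le h.chr_right hB₂
  refine ⟨B₁', GA_mono h.cost_left hB₁', B₂', GA_mono h.cost_right hB₂', fun p hp => ?_⟩
  rcases h.mem p hp with rfl | ⟨r, hr, rfl⟩
  · exact ⟨1, le_rfl, by omega, h₁, h₂⟩
  · obtain ⟨y, hy₁, hy₂, hr₁, hr₂⟩ := hprod r hr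
    have := h.b_le
    rw [List.length_drop] at hy₂
    exact ⟨y + b, by omega, by omega, hmem₁ _ hr₁, hmem₂ _ hr₂⟩

theorem IsFactorStep.of_consStep {a b c : ℕ} {C : List (ℕ × ℕ)} (hd : IsStep (a, c))
    (hX : a ≤ X.length) (hZ : c ≤ Z.length) (hC : IsAlignment (X.drop a) (Z.drop c) C)
    (hg : IsGreedy X Z (consStep (a, c) C)) (hb : b ≤ 1) (hY : b ≤ Y.length)
    (hXY : chr X 1 = chr Y 1 → a = b) (hYZ : chr Y 1 = chr Z 1 → b = c)
    (hleft : stepCost X Y (1, 1) (1 + a, 1 + b) + ed (X.drop a) (Y.drop b) ≤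
      2 * stepCost X Z (1, 1) (1 + a, 1 + c) + ed X Y)
    (hright : stepCost Y Z (1, 1) (1 + b, 1 + c) + ed (X.drop a) (Y.drop b) ≤
      2 * stepCost X Z (1, 1) (1 + a, 1 + c) + ed X Y) :
    IsFactorStep X Y Z (consStep (a, c) C) a b c C := by
  have hcost : alignCost X Z (consStep (a, c) C) =
      stepCost X Z (1, 1) (1 + a, 1 + c) + alignCost (X.drop a) (Z.drop c) C :=
    alignCost_consStep hC
  have hpos := hd.pos
  exact
    { a_le_one := hd.le_one.1, b_le_one := hb, c_le_one := hd.le_one.2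
      pos := by dsimp only at hpos; omega
      a_le := hX, b_le := hY, c_le := hZ
      mem := fun p hp => mem_consStep.1 hp
      isAlignment := hC
      isGreedy := ((isGreedy_consStep_iff hd hX hZ hC).1 hg).1
      chr_left := hXY, chr_right := hYZ
      cost_left := by omega
      cost_right := by omega }

theorem IsFactorStep.stay {A : List (ℕ × ℕ)} (hA : IsAlignment X Z A) (hg : IsGreedy X Z A)
    (hXY : chr X 1 ≠ chr Y 1) (hYZ : chr Y 1 ≠ chr Z 1) (hed : ed X (Y.drop 1) + 1 ≤ ed X Y) :
    IsFactorStep X Y Z A 0 1 0 A := by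
  have hY : 1 ≤ Y.length := by
    by_contra h
    rw [List.eq_nil_of_length_eq_zero (by omega : Y.length = 0)] at hed
    simp at hed
  have := stepCost_le_one X Y (1, 1) (1 + 0, 1 + 1)
  have := stepCost_le_one Y Z (1, 1) (1 + 1, 1 + 0)
  exact
    { a_le_one := zero_le_one, b_le_one := le_rfl, c_le_one := zero_le_one
      pos := one_pos
      a_le := Nat.zero_le _, b_le := hY, c_le := Nat.zero_le _
      mem := fun p hp => Or.inr ⟨p, hp, by rw [Prod.mk_zero_zero, add_zero]⟩
      isAlignment := hA
      isGreedy := hg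
      chr_left := fun h => absurd h hXY, chr_right := fun h => absurd h hYZ
      cost_left := by simp only [List.drop_zero]; omega
      cost_right := by simp only [List.drop_zero]; omega }

theorem exists_isFactorStep_of_chr_ne {a c : ℕ} {C : List (ℕ × ℕ)} (hd : IsStep (a, c))
    (hX : a ≤ X.length) (hZ : c ≤ Z.length) (hC : IsAlignment (X.drop a) (Z.drop c) C)
    (hg : IsGreedy X Z (consStep (a, c) C)) (hXZ : chr X 1 ≠ chr Z 1) :
    ∃ b, IsFactorStep X Y Z (consStep (a, c) C) a b c C := by
  have hs : stepCost X Z (1, 1) (1 + a, 1 + c) = 1 := by simp [stepCost, hXZ]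
  have key : ∀ b ≤ 1, b ≤ Y.length → (chr X 1 = chr Y 1 → a = b) →
      (chr Y 1 = chr Z 1 → b = c) → IsFactorStep X Y Z (consStep (a, c) C) a b c C := by
    intro b hb hY hXY hYZ
    have := ed_drop_drop_le_add_one (X := X) (Y := Y) (a := a) hd.le_one.1 hb
    have := stepCost_le_one X Y (1, 1) (1 + a, 1 + b)
    have := stepCost_le_one Y Z (1, 1) (1 + b, 1 + c)
    exact .of_consStep hd hX hZ hC hg hb hY hXY hYZ (by omega) (by omega)
  by_cases hXY : chr X 1 = chr Y 1
  · exact ⟨a, key a hd.le_one.1 (le_length_of_chr_one_eq hd.le_one.1 hX hXY) (fun _ => rfl)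
      fun hYZ => absurd (hXY.trans hYZ) hXZ⟩
  by_cases hYZ : chr Y 1 = chr Z 1
  · exact ⟨c, key c hd.le_one.2 (le_length_of_chr_one_eq hd.le_one.2 hZ hYZ.symm)
      (fun h => absurd h hXY) fun _ => rfl⟩
  · exact ⟨0, key 0 zero_le_one (Nat.zero_le _) (fun h => absurd h hXY) fun h => absurd h hYZ⟩

theorem exists_isFactorStep_of_chr_eq {C : List (ℕ × ℕ)} (hX : 1 ≤ X.length)
    (hZ : 1 ≤ Z.length) (hC : IsAlignment (X.drop 1) (Z.drop 1) C)
    (hg : IsGreedy X Z (consStep (1, 1) C)) (hXZ : chr X 1 = chr Z 1) :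
    ∃ a b c A', IsFactorStep X Y Z (consStep (1, 1) C) a b c A' := by
  have hd : IsStep (1, 1) := Or.inl rfl
  have hs : stepCost X Z (1, 1) (1 + 1, 1 + 1) = 0 := by simp [stepCost, hXZ]
  by_cases hXY : chr X 1 = chr Y 1
  · have hY := le_length_of_chr_one_eq le_rfl hX hXY
    have hsXY : stepCost X Y (1, 1) (1 + 1, 1 + 1) = 0 := by simp [stepCost, hXY]
    have hsYZ : stepCost Y Z (1, 1) (1 + 1, 1 + 1) = 0 := by simp [stepCost, ← hXY, hXZ]
    obtain ⟨x, X, rfl⟩ := List.exists_cons_of_length_pos hX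
    obtain ⟨y, Y, rfl⟩ := List.exists_cons_of_length_pos hY
    have := ed_le_ed_cons_cons x y X Y
    exact ⟨1, 1, 1, C, .of_consStep hd hX hZ hC hg le_rfl hY (fun _ => rfl) (fun _ => rfl)
      (by simp only [List.drop_one, List.tail_cons]; omega)
      (by simp only [List.drop_one, List.tail_cons]; omega)⟩
  have hYZ : chr Y 1 ≠ chr Z 1 := fun h => hXY (hXZ.trans h.symm)
  obtain ⟨d, hd', hdX, hdY, hle⟩ := exists_ed_drop_add_one_le hXY
  by_cases hstay : d = (0, 1)
  · subst hstay
    exact ⟨0, 1, 0, _, .stay (isAlignment_consStep hd hX hZ hC) hg hXY hYZ hle⟩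
  have hd1 : d.1 = 1 := by rcases hd' with rfl | rfl | rfl <;> simp_all
  rw [hd1] at hle
  have := stepCost_le_one X Y (1, 1) (1 + 1, 1 + d.2)
  have := stepCost_le_one Y Z (1, 1) (1 + d.2, 1 + 1)
  exact ⟨1, d.2, 1, C, .of_consStep hd hX hZ hC hg hd'.le_one.2 hdY (fun h => absurd h hXY)
    (fun h => absurd h hYZ) (by omega) (by omega)⟩

theorem exists_isFactorStep {A : List (ℕ × ℕ)} (hA : IsAlignment X Z A) (hg : IsGreedy X Z A)
    (hne : X ≠ [] ∨ Y ≠ [] ∨ Z ≠ []) : ∃ a b c A', IsFactorStep X Y Z A a b c A' := by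
  rcases hA.eq_nil_or_eq_consStep with ⟨rfl, rfl, rfl⟩ | ⟨⟨a, c⟩, C, hd, hX, hZ, hC, rfl⟩
  · have hY : Y ≠ [] := by simpa using hne
    have hXY : chr ([] : List α) 1 ≠ chr Y 1 := fun h => hY (chr_one_eq_none_iff.1 h.symm)
    obtain ⟨d, hd, hdX, -, hle⟩ := exists_ed_drop_add_one_le hXY
    rcases hd with rfl | rfl | rfl
    · simp at hdX
    · simp at hdX
    exact ⟨0, 1, 0, _, .stay isAlignment_nil_nil hg hXY hXY.symm hle⟩
  by_cases hXZ : chr X 1 = chr Z 1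
  · obtain ⟨rfl, rfl⟩ := Prod.mk.inj (((isGreedy_consStep_iff hd hX hZ hC).1 hg).2 hXZ)
    exact exists_isFactorStep_of_chr_eq hX hZ hC hg hXZ
  · obtain ⟨b, h⟩ := exists_isFactorStep_of_chr_ne hd hX hZ hC hg hXZ
    exact ⟨a, b, c, C, h⟩

theorem hasGreedyFactors_of_isGreedy {A : List (ℕ × ℕ)} (hA : IsAlignment X Z A)
    (hg : IsGreedy X Z A) : HasGreedyFactors (2 * alignCost X Z A + ed X Y) X Y Z A := by
  induction hn : X.length + Y.length + Z.length using Nat.strong_induction_on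
    generalizing X Y Z A with
  | _ n ih =>
  by_cases hnil : X = [] ∧ Y = [] ∧ Z = []
  · obtain ⟨rfl, rfl, rfl⟩ := hnil
    exact hasGreedyFactors_nil hA
  obtain ⟨a, b, c, A', h⟩ := exists_isFactorStep (Y := Y) hA hg (by tauto)
  refine h.hasGreedyFactors (ih _ ?_ h.isAlignment h.isGreedy rfl)
  have := h.pos
  have := h.a_le
  have := h.b_le
  have := h.c_le
  simp only [List.length_drop]
  omega

end Factorization

/-- Every greedy alignment `A` of `X` and `Z` of cost at most `k` is the
product of a greedy alignment of `X, Y` of cost at most `d` and a greedy alignment of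
`Y, Z` of cost at most `d`, where `d = 2·cost(A) + ed(X,Y)`. -/
theorem greedy_product (X Y Z : List α) (k : ℕ) (A : List (ℕ × ℕ)) (hA : A ∈ GA k X Z) :
    ∃ AXY ∈ GA (2 * alignCost X Z A + ed X Y) X Y,
      ∃ AYZ ∈ GA (2 * alignCost X Z A + ed X Y) Y Z,
        IsProductOf Y.length A AXY AYZ :=
  hasGreedyFactors_of_isGreedy hA.1 hA.2.1
end

section
/- If the CGK walks over X and Y (with common randomness) are complete, then the zip alignment A of these walks is a greedy alignment of X and Y whose cost is at most hd(CGK(X), CGK(Y)), the Hamming distance between the CGK embeddings of X and Y. -/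
open Classical

universe u

variable {α : Type u}

/-- One step of the CGK walk at time `t` from position `s` (1-indexed): if `s ≤ |S|`, move
forward by `R t (S[s]) ∈ {0,1}`; otherwise stay. -/
def cgkStep (R : ℕ → α → Bool) (S : List α) (t s : ℕ) : ℕ :=
  match S[s - 1]? with
  | some a => s + (if R t a then 1 else 0)
  | none => s

/-- The CGK walk: `cgkWalk R S t` is the position `s_{t+1}` of the walk over `S`
(`s_1 = 1`, `s_{t+1} = s_t + R_t(S[s_t])` while `s_t ≤ |S|`). -/
def cgkWalk (R : ℕ → α → Bool) (S : List α) : ℕ → ℕ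
  | 0 => 1
  | t + 1 => cgkStep R S (t + 1) (cgkWalk R S t)

/-- The CGK embedding of `S` (of length `3n`): the `t`-th character is `S[s_t]` if the
walk is inside `S`, and `⊥` (= `none`) otherwise. -/
def cgkEmb (R : ℕ → α → Bool) (S : List α) (n : ℕ) : List (Option α) :=
  (List.range (3 * n)).map (fun t => S[cgkWalk R S t - 1]?)

/-- Hamming distance between two lists (number of positions where they differ). -/
noncomputable def hamming {β : Type u} (u v : List β) : ℕ :=
  ((Finset.range (max u.length v.length)).filter (fun i => u[i]? ≠ v[i]?)).card

/-- The zip alignment of the CGK walks over `X` and `Y`: pair the two walks step by step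
and remove repeated (adjacent equal) entries. -/
def zipAlign (R : ℕ → α → Bool) (X Y : List α) (n : ℕ) : List (ℕ × ℕ) :=
  ((List.range (3 * n + 1)).map (fun t => (cgkWalk R X t, cgkWalk R Y t))).destutter (· ≠ ·)


/-!
While the two walks read the same symbol they move in lockstep, since they use the same
random bit. Hence a time step at which the walk pair moves, but not diagonally over equal
symbols, is a time step at which `CGK(X)` and `CGK(Y)` differ; this bounds the cost by the
Hamming distance and rules out a breakpoint `(x, y)` with `X[x] = Y[y]` before the end.
Removing repeated pairs only drops the time steps at which neither walk moves.
-/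

namespace List

variable {β M : Type*}

theorem head?_destutter' (R : β → β → Prop) [DecidableRel R] (a : β) :
    ∀ l : List β, (l.destutter' R a).head? = some a
  | [] => rfl
  | b :: l => by
    rw [destutter'_cons]
    split
    · rfl
    · exact head?_destutter' R a l

theorem head?_destutter (R : β → β → Prop) [DecidableRel R] :
    ∀ l : List β, (l.destutter R).head? = l.head?
  | [] => rfl
  | a :: l => by rw [destutter_cons', head?_destutter', head?_cons]

theorem exists_destutter'_eq_cons (R : β → β → Prop) [DecidableRel R] (a : β) (l : List β) :
    ∃ t, l.destutter' R a = a :: t :=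
  head?_eq_some_iff.mp (head?_destutter' R a l)

theorem sum_zipWith_map_range_succ [AddCommMonoid M] (c : β → β → M) (f : ℕ → β) (m : ℕ) :
    (zipWith c ((range (m + 1)).map f) ((range (m + 1)).map f).tail).sum =
      ∑ t ∈ Finset.range m, c (f t) (f (t + 1)) := by
  induction m generalizing f with
  | zero => rfl
  | succ m ih =>
    rw [Finset.sum_range_succ', ← ih, range_succ_eq_map, range_succ_eq_map (n := m)]
    simp [add_comm, Function.comp_def]

variable [DecidableEq β]

theorem getLast?_destutter'_ne :
    ∀ (l : List β) (a : β), (l.destutter' (· ≠ ·) a).getLast? = (a :: l).getLast?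
  | [], _ => rfl
  | b :: l, a => by
    by_cases hab : a = b
    · subst hab
      rw [destutter'_cons_neg _ (not_not.mpr rfl), getLast?_destutter'_ne l a, getLast?_cons_cons]
    · obtain ⟨t, ht⟩ := exists_destutter'_eq_cons (· ≠ ·) b l
      rw [destutter'_cons_pos _ hab, ht, getLast?_cons_cons, ← ht, getLast?_destutter'_ne l b,
        getLast?_cons_cons]

theorem getLast?_destutter_ne : ∀ l : List β, (l.destutter (· ≠ ·)).getLast? = l.getLast?
  | [] => rfl
  | a :: l => by rw [destutter_cons', getLast?_destutter'_ne]

theorem IsChain.destutter'_ne {r : β → β → Prop} :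
    ∀ {l : List β} {a : β}, (a :: l).IsChain (fun x y => x ≠ y → r x y) →
      (l.destutter' (· ≠ ·) a).IsChain r
  | [], _, _ => isChain_singleton _
  | b :: l, a, h => by
    by_cases hab : a = b
    · subst hab
      rw [destutter'_cons_neg _ (not_not.mpr rfl)]
      exact h.tail.destutter'_ne
    · obtain ⟨t, ht⟩ := exists_destutter'_eq_cons (· ≠ ·) b l
      rw [destutter'_cons_pos _ hab, ht, isChain_cons_cons, ← ht]
      exact ⟨(isChain_cons_cons.mp h).1 hab, h.tail.destutter'_ne⟩

theorem IsChain.destutter_ne {r : β → β → Prop} :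
    ∀ {l : List β}, l.IsChain (fun x y => x ≠ y → r x y) → (l.destutter (· ≠ ·)).IsChain r
  | [], _ => isChain_nil
  | _ :: _, h => by rw [destutter_cons']; exact h.destutter'_ne

variable [AddMonoid M]

theorem sum_zipWith_destutter'_ne (c : β → β → M) :
    ∀ (l : List β) (a : β),
      (zipWith c (l.destutter' (· ≠ ·) a) (l.destutter' (· ≠ ·) a).tail).sum =
        (zipWith (fun x y => if x = y then 0 else c x y) (a :: l) l).sum
  | [], _ => rfl
  | b :: l, a => by
    by_cases hab : a = b
    · subst hab
      rw [destutter'_cons_neg _ (not_not.mpr rfl), sum_zipWith_destutter'_ne c l a]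
      simp
    · have ih := sum_zipWith_destutter'_ne c l b
      obtain ⟨t, ht⟩ := exists_destutter'_eq_cons (· ≠ ·) b l
      rw [ht, tail_cons] at ih
      rw [destutter'_cons_pos _ hab, ht, tail_cons, zipWith_cons_cons, sum_cons, ih]
      simp [hab]

theorem sum_zipWith_destutter_ne (c : β → β → M) (l : List β) :
    (zipWith c (l.destutter (· ≠ ·)) (l.destutter (· ≠ ·)).tail).sum =
      (zipWith (fun x y => if x = y then 0 else c x y) l l.tail).sum := by
  cases l with
  | nil => rfl
  | cons a l => rw [destutter_cons', sum_zipWith_destutter'_ne, tail_cons]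

end List

theorem cgkWalk_succ_eq_or (R : ℕ → α → Bool) (S : List α) (t : ℕ) :
    cgkWalk R S (t + 1) = cgkWalk R S t ∨ cgkWalk R S (t + 1) = cgkWalk R S t + 1 := by
  simp only [cgkWalk, cgkStep]
  split <;> [split_ifs <;> simp; simp]

theorem cgkWalk_succ_sub_eq_of_getElem?_eq (R : ℕ → α → Bool) {X Y : List α} {t : ℕ}
    (h : X[cgkWalk R X t - 1]? = Y[cgkWalk R Y t - 1]?) :
    cgkWalk R X (t + 1) - cgkWalk R X t = cgkWalk R Y (t + 1) - cgkWalk R Y t := by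
  simp only [cgkWalk, cgkStep, h]
  split <;> simp

def cgkPair (R : ℕ → α → Bool) (X Y : List α) (t : ℕ) : ℕ × ℕ :=
  (cgkWalk R X t, cgkWalk R Y t)

def IsGreedyStep (X Y : List α) (p q : ℕ × ℕ) : Prop :=
  (q = (p.1 + 1, p.2 + 1) ∨ q = (p.1 + 1, p.2) ∨ q = (p.1, p.2 + 1)) ∧
    (chr X p.1 = chr Y p.2 → q = (p.1 + 1, p.2 + 1))

theorem isGreedyStep_cgkPair (R : ℕ → α → Bool) (X Y : List α) (t : ℕ)
    (hmove : cgkPair R X Y t ≠ cgkPair R X Y (t + 1)) :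
    IsGreedyStep X Y (cgkPair R X Y t) (cgkPair R X Y (t + 1)) := by
  have hX := cgkWalk_succ_eq_or R X t
  have hY := cgkWalk_succ_eq_or R Y t
  simp only [IsGreedyStep, cgkPair, ne_eq, Prod.ext_iff] at hmove ⊢
  refine ⟨by omega, fun hsame => ?_⟩
  have hlockstep := cgkWalk_succ_sub_eq_of_getElem?_eq R hsame
  omega

theorem isGreedy_of_isChain_isGreedyStep {X Y : List α} {A : List (ℕ × ℕ)}
    (hA : A.IsChain (IsGreedyStep X Y))
    (hlast : A.getLast? = some (X.length + 1, Y.length + 1)) : IsGreedy X Y A := by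
  rintro p ⟨hpA, hpm⟩ hx hy hsame
  obtain ⟨i, hi, rfl⟩ := List.getElem_of_mem hpA
  have hi1 : i + 1 < A.length := by
    by_contra hlt
    rw [List.getLast?_eq_getElem?, show A.length - 1 = i by omega, List.getElem?_eq_getElem hi,
      Option.some_inj] at hlast
    rw [hlast] at hx
    omega
  refine hpm ⟨i, List.getElem?_eq_getElem hi, ?_, hx, hy, hsame⟩
  rw [List.getElem?_eq_getElem hi1, ((List.isChain_iff_getElem.mp hA) i hi1).2 hsame]

theorem stepCost_cgkPair_le (R : ℕ → α → Bool) (X Y : List α) (t : ℕ) :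
    (if cgkPair R X Y t = cgkPair R X Y (t + 1) then 0
      else stepCost X Y (cgkPair R X Y t) (cgkPair R X Y (t + 1)))
      ≤ if X[cgkWalk R X t - 1]? = Y[cgkWalk R Y t - 1]? then 0 else 1 := by
  by_cases hstay : cgkPair R X Y t = cgkPair R X Y (t + 1)
  · simp [hstay]
  by_cases hsame : X[cgkWalk R X t - 1]? = Y[cgkWalk R Y t - 1]?
  · rw [if_neg hstay, if_pos hsame, stepCost,
      if_pos ⟨(isGreedyStep_cgkPair R X Y t hstay).2 hsame, hsame⟩]
  · rw [if_neg hstay, if_neg hsame, stepCost]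
    split_ifs <;> simp

theorem hamming_cgkEmb (R : ℕ → α → Bool) (X Y : List α) (n : ℕ) :
    hamming (cgkEmb R X n) (cgkEmb R Y n) =
      ∑ t ∈ Finset.range (3 * n), if X[cgkWalk R X t - 1]? = Y[cgkWalk R Y t - 1]? then 0 else 1 := by
  rw [hamming, Finset.card_filter]
  simp only [cgkEmb, List.length_map, List.length_range, max_self]
  refine Finset.sum_congr rfl fun t ht => ?_
  simp [List.getElem?_range (Finset.mem_range.mp ht), ite_not]

theorem alignCost_zipAlign (R : ℕ → α → Bool) (X Y : List α) (n : ℕ) :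
    alignCost X Y (zipAlign R X Y n) =
      ∑ t ∈ Finset.range (3 * n),
        if cgkPair R X Y t = cgkPair R X Y (t + 1) then 0
        else stepCost X Y (cgkPair R X Y t) (cgkPair R X Y (t + 1)) := by
  rw [alignCost, List.map_zip_eq_zipWith, zipAlign, List.sum_zipWith_destutter_ne,
    List.sum_zipWith_map_range_succ]
  rfl

theorem cgk_zip_alignment_greedy_general (n : ℕ) (R : ℕ → α → Bool) (X Y : List α)
    (hcX : cgkWalk R X (3 * n) = X.length + 1)
    (hcY : cgkWalk R Y (3 * n) = Y.length + 1) :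
    IsAlignment X Y (zipAlign R X Y n) ∧ IsGreedy X Y (zipAlign R X Y n) ∧
    alignCost X Y (zipAlign R X Y n) ≤ hamming (cgkEmb R X n) (cgkEmb R Y n) := by
  have hchain : (zipAlign R X Y n).IsChain (IsGreedyStep X Y) :=
    List.IsChain.destutter_ne <| (List.isChain_map _).mpr <|
      (List.isChain_range_succ _ _).mpr fun t _ => isGreedyStep_cgkPair R X Y t
  have hlast : (zipAlign R X Y n).getLast? = some (X.length + 1, Y.length + 1) := by
    rw [zipAlign, List.getLast?_destutter_ne, List.getLast?_map, List.getLast?_range]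
    simp [hcX, hcY]
  refine ⟨⟨?_, ?_, hlast, hchain.imp fun _ _ h => h.1⟩,
    isGreedy_of_isChain_isGreedyStep hchain hlast, ?_⟩
  · simp [zipAlign]
  · rw [zipAlign, List.head?_destutter]
    simp [List.range_succ_eq_map, cgkWalk]
  · rw [alignCost_zipAlign, hamming_cgkEmb]
    exact Finset.sum_le_sum fun t _ => stepCost_cgkPair_le R X Y t

/-- If the CGK walks over `X` and `Y` (with common randomness `R`) are
complete, then the zip alignment of the walks is a greedy alignment of `X` and `Y` whose
cost is at most the Hamming distance between the CGK embeddings of `X` and `Y`. -/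
theorem cgk_zip_alignment_greedy (n : ℕ) (R : ℕ → α → Bool) (X Y : List α)
    (hX : X.length ≤ n) (hY : Y.length ≤ n)
    (hcX : cgkWalk R X (3 * n) = X.length + 1)
    (hcY : cgkWalk R Y (3 * n) = Y.length + 1) :
    IsAlignment X Y (zipAlign R X Y n) ∧ IsGreedy X Y (zipAlign R X Y n) ∧
    alignCost X Y (zipAlign R X Y n) ≤ hamming (cgkEmb R X n) (cgkEmb R Y n) :=
  cgk_zip_alignment_greedy_general n R X Y hcX hcY
end

section
/- Let S be a string and k a positive integer, and suppose the fragment S[ℓ..r) (non-empty) satisfies maxRevLZ(S[ℓ..r)) ≤ k, where maxRevLZ(W) := max over all fragments W' of W of |LZ(reverse(W'))|. Then: (a) maxRevLZ(S[ℓ..r]) ≤ k if and only if |LZ(reverse(S[ℓ..r]))| ≤ k; (b) maxRevLZ(S[ℓ+1..r)) ≤ k; and (c) maxRevLZ(S[ℓ..r]) ≤ k+1. -/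
open Classical

universe u

variable {α : Type u}

/-- The fragment `X[i..i+ℓ)` of a string (1-indexed, half-open). -/
def frag (X : List α) (i ℓ : ℕ) : List α := (X.drop (i - 1)).take ℓ

/-- `X[i..i+ℓ)` is a previous factor: a non-empty fragment of `X` that also occurs
starting at some earlier position `i' < i`. -/
def IsPrevFactor (X : List α) (i ℓ : ℕ) : Prop :=
  1 ≤ ℓ ∧ i + ℓ ≤ X.length + 1 ∧ ∃ i', 1 ≤ i' ∧ i' < i ∧ frag X i' ℓ = frag X i ℓ

/-- The length of the LZ77 phrase starting at position `i`: the longest previous factor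
starting there, or a single character if none exists. -/
noncomputable def lzNext (X : List α) (i : ℕ) : ℕ :=
  max 1 (sSup {ℓ | IsPrevFactor X i ℓ})

/-- Auxiliary fuelled counter for the number of LZ77 phrases starting from position `i`. -/
noncomputable def lzCountAux (X : List α) : ℕ → ℕ → ℕ
  | 0, _ => 0
  | fuel + 1, i => if X.length < i then 0 else 1 + lzCountAux X fuel (i + lzNext X i)

/-- `|LZ(X)|`: the number of phrases of the (greedy) LZ77 factorization of `X`. -/
noncomputable def lzSize (X : List α) : ℕ := lzCountAux X (X.length + 1) 1

/-- An LZ-like factorization of `X`: non-empty phrases whose concatenation is `X`, where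
every phrase of length `> 1` is a previous factor at its position. -/
def IsLZLike (X : List α) (F : List (List α)) : Prop :=
  F.flatten = X ∧ (∀ p ∈ F, p ≠ []) ∧
  ∀ (a b : List (List α)) (p : List α), F = a ++ p :: b → 1 < p.length →
    ∃ i', 1 ≤ i' ∧ i' < a.flatten.length + 1 ∧ frag X i' p.length = p

/-- `maxRevLZ(W)`: the maximum, over all fragments `W'` of `W`, of the number of LZ77
phrases of `reverse(W')`. -/
noncomputable def maxRevLZ (W : List α) : ℕ :=
  sSup {z | ∃ l n, z = lzSize (((W.drop l).take n).reverse)}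

/-!
Greedy LZ77 parsing is optimal: if every phrase of some parse of `Y`, cut at any position,
still leaves a previous factor (or a single letter), then greedy never falls behind that
parse. Applied to the greedy parse of `X`, this shows that `|LZ|` is monotone under taking
prefixes and grows by at most one when a letter is prepended.

Every fragment of `W·c` is a fragment of `W` or a suffix of `W·c`; the reverse of the latter
is a prefix of `reverse(W·c) = c · reverse(W)`, whose LZ77 size is at most `|LZ(reverse W)| + 1`.
-/

lemma frag_add {X : List α} {a d L L' : ℕ} (ha : 1 ≤ a) (hd : d + L' ≤ L) :
    frag X (a + d) L' = ((frag X a L).drop d).take L' := by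
  unfold frag
  rw [List.drop_take, List.take_take, List.drop_drop]
  congr 2 <;> omega

lemma frag_of_isPrefix {X Y : List α} {a L : ℕ} (hY : Y <+: X) (h : a - 1 + L ≤ Y.length) :
    frag Y a L = frag X a L := by
  obtain ⟨t, rfl⟩ := hY
  unfold frag
  rw [List.drop_append_of_le_length (by omega),
    List.take_append_of_le_length (by rw [List.length_drop]; omega)]

lemma frag_succ_sub_one_isInfix (X : List α) (i n : ℕ) :
    frag X (i + 1) (n - 1) <:+: frag X i n := by
  rcases Nat.eq_zero_or_pos i with rfl | hi
  · exact (List.take_prefix_take_left (Nat.sub_le n 1)).isInfix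
  · have h : frag X (i + 1) (n - 1) = (frag X i n).drop 1 := by
      unfold frag
      rw [List.drop_take, List.drop_drop]
      congr 2; omega
    rw [h]
    exact (List.drop_suffix 1 _).isInfix

namespace IsPrevFactor

variable {X : List α} {i ℓ : ℕ}

lemma subfragment (h : IsPrevFactor X i ℓ) {g e : ℕ} (hig : i ≤ g) (hge : g < e)
    (he : e ≤ i + ℓ) : IsPrevFactor X g (e - g) := by
  obtain ⟨-, hend, i', hi', hi'i, hfrag⟩ := h
  refine ⟨by omega, by omega, i' + (g - i), by omega, by omega, ?_⟩
  have hsub : g - i + (e - g) ≤ ℓ := by omega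
  have hg : frag X g (e - g) = ((frag X i ℓ).drop (g - i)).take (e - g) := by
    rw [← frag_add (by omega) hsub, Nat.add_sub_cancel' hig]
  rw [frag_add hi' hsub, hg, hfrag]

lemma of_isPrefix (h : IsPrevFactor X i ℓ) {Y : List α} (hY : Y <+: X)
    (hend : i + ℓ ≤ Y.length + 1) : IsPrevFactor Y i ℓ := by
  obtain ⟨hℓ, -, i', hi', hi'i, hfrag⟩ := h
  refine ⟨hℓ, hend, i', hi', hi'i, ?_⟩
  rw [frag_of_isPrefix hY (by omega), frag_of_isPrefix hY (by omega), hfrag]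

lemma cons (h : IsPrevFactor X i ℓ) (c : α) : IsPrevFactor (c :: X) (i + 1) ℓ := by
  obtain ⟨hℓ, hend, i', hi', hi'i, hfrag⟩ := h
  have hshift : ∀ j, 1 ≤ j → frag (c :: X) (j + 1) ℓ = frag X j ℓ := by
    intro j hj
    unfold frag
    rw [show j + 1 - 1 = j - 1 + 1 by omega, List.drop_succ_cons]
  refine ⟨hℓ, by simp only [List.length_cons]; omega, i' + 1, by omega, by omega, ?_⟩
  rw [hshift i' hi', hshift i (by omega), hfrag]

end IsPrevFactor

lemma one_le_lzNext (X : List α) (i : ℕ) : 1 ≤ lzNext X i := le_max_left _ _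

lemma bddAbove_setOf_isPrevFactor (X : List α) (i : ℕ) : BddAbove {ℓ | IsPrevFactor X i ℓ} :=
  ⟨X.length + 1, fun ℓ hℓ => (Nat.le_add_left ℓ i).trans hℓ.2.1⟩

lemma IsPrevFactor.le_lzNext {X : List α} {i ℓ : ℕ} (h : IsPrevFactor X i ℓ) :
    ℓ ≤ lzNext X i :=
  (le_csSup (bddAbove_setOf_isPrevFactor X i) h).trans (le_max_right _ _)

lemma lzNext_eq_one_or_isPrevFactor (X : List α) (i : ℕ) :
    lzNext X i = 1 ∨ IsPrevFactor X i (lzNext X i) := by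
  rcases Set.eq_empty_or_nonempty {ℓ | IsPrevFactor X i ℓ} with hempty | hne
  · left
    simp [lzNext, hempty]
  · right
    have hmem := Nat.sSup_mem hne (bddAbove_setOf_isPrevFactor X i)
    rwa [lzNext, max_eq_right hmem.1]

lemma add_lzNext_le {X : List α} {i : ℕ} (hi : i ≤ X.length) :
    i + lzNext X i ≤ X.length + 1 := by
  rcases lzNext_eq_one_or_isPrevFactor X i with h | h
  · omega
  · exact h.2.1

lemma lzCountAux_le_fuel (X : List α) (fuel i : ℕ) : lzCountAux X fuel i ≤ fuel := by
  induction fuel generalizing i with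
  | zero => simp [lzCountAux]
  | succ fuel ih =>
    unfold lzCountAux
    split
    · omega
    · have := ih (i + lzNext X i); omega

lemma lzSize_le_length_add_one (X : List α) : lzSize X ≤ X.length + 1 :=
  lzCountAux_le_fuel X _ 1

lemma lzCountAux_add_fuel (X : List α) {fuel i : ℕ} (hfuel : X.length + 1 ≤ fuel + i) (d : ℕ) :
    lzCountAux X (fuel + d) i = lzCountAux X fuel i := by
  induction fuel generalizing i with
  | zero =>
    cases d with
    | zero => rfl
    | succ d => simp [lzCountAux, show X.length < i by omega]
  | succ fuel ih =>
    rw [show fuel + 1 + d = fuel + d + 1 by omega]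
    simp only [lzCountAux]
    split
    · rfl
    · rw [ih (by have := one_le_lzNext X i; omega)]

/-- The number of greedy LZ77 phrases covering `X[i..|X|]`. -/
noncomputable def lzCount (X : List α) (i : ℕ) : ℕ := lzCountAux X (X.length + 1) i

lemma lzCount_of_length_lt {X : List α} {i : ℕ} (hi : X.length < i) : lzCount X i = 0 := by
  simp [lzCount, lzCountAux, hi]

lemma lzCount_of_le_length {X : List α} {i : ℕ} (hi : i ≤ X.length) :
    lzCount X i = 1 + lzCount X (i + lzNext X i) := by
  show (if X.length < i then 0 else 1 + lzCountAux X X.length (i + lzNext X i)) = _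
  rw [if_neg (not_lt.2 hi), lzCount,
    lzCountAux_add_fuel X (by have := one_le_lzNext X i; omega) 1]

/-- Greedy optimality: a parse of `Y` simulated, with an offset `s`, by the greedy parse of
`X` has at least as many phrases as the greedy parse of `Y`. -/
theorem lzCount_le_lzCount_of_simulation {X Y : List α} {s : ℕ}
    (hlen : Y.length ≤ X.length + s)
    (hsim : ∀ i g, i ≤ X.length → i + s ≤ g → g < i + lzNext X i + s → g ≤ Y.length →
      min (i + lzNext X i + s) (Y.length + 1) ≤ g + lzNext Y g)
    {i g : ℕ} (hig : i + s ≤ g) : lzCount Y g ≤ lzCount X i := by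
  by_cases hi : X.length < i
  · rw [lzCount_of_length_lt (show Y.length < g by omega)]
    exact Nat.zero_le _
  rw [lzCount_of_le_length (not_lt.1 hi)]
  have hn := one_le_lzNext X i
  by_cases hjump : i + lzNext X i + s ≤ g
  · have := lzCount_le_lzCount_of_simulation hlen hsim hjump
    omega
  by_cases hg : Y.length < g
  · rw [lzCount_of_length_lt hg]
    exact Nat.zero_le _
  rw [lzCount_of_le_length (not_lt.1 hg)]
  have hstep := hsim i g (by omega) hig (by omega) (by omega)
  by_cases hcatch : i + lzNext X i + s ≤ g + lzNext Y g
  · have := lzCount_le_lzCount_of_simulation hlen hsim hcatch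
    omega
  · rw [lzCount_of_length_lt (show Y.length < g + lzNext Y g by omega)]
    omega
termination_by X.length + 1 - i

theorem lzSize_le_of_isPrefix {X Y : List α} (hY : Y <+: X) : lzSize Y ≤ lzSize X := by
  refine lzCount_le_lzCount_of_simulation (s := 0) hY.length_le ?_ le_rfl
  intro i g hi hig hg hgY
  rcases lzNext_eq_one_or_isPrevFactor X i with hone | hprev
  · have := one_le_lzNext Y g
    omega
  · set e := min (i + lzNext X i) (Y.length + 1)
    have hsub : IsPrevFactor Y g (e - g) :=
      (hprev.subfragment hig (by omega) (by omega)).of_isPrefix hY (by omega)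
    have := hsub.le_lzNext
    omega

theorem lzSize_cons_le (c : α) (X : List α) : lzSize (c :: X) ≤ lzSize X + 1 := by
  have hstart := one_le_lzNext (c :: X) 1
  have hrest : lzCount (c :: X) (1 + lzNext (c :: X) 1) ≤ lzCount X 1 := by
    refine lzCount_le_lzCount_of_simulation (s := 1) (by simp) ?_ (by omega)
    intro i g hi hig hg _
    have hend := add_lzNext_le hi
    rcases lzNext_eq_one_or_isPrevFactor X i with hone | hprev
    · have := one_le_lzNext (c :: X) g
      omega
    · have hsub := (hprev.cons c).subfragment (g := g) (e := i + lzNext X i + 1)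
        (by omega) (by omega) (by omega)
      have := hsub.le_lzNext
      simp only [List.length_cons]
      omega
  show lzCount (c :: X) 1 ≤ lzCount X 1 + 1
  rw [lzCount_of_le_length (by simp)]
  omega

lemma exists_eq_take_drop_of_isInfix {U W : List α} (h : U <:+: W) :
    ∃ a n, U = (W.drop a).take n := by
  obtain ⟨t, hUt, htW⟩ := List.infix_iff_prefix_suffix.1 h
  exact ⟨_, _, (List.suffix_iff_eq_drop.1 htW) ▸ List.prefix_iff_eq_take.1 hUt⟩

lemma maxRevLZ_le_iff {W : List α} {k : ℕ} :
    maxRevLZ W ≤ k ↔ ∀ U, U <:+: W → lzSize U.reverse ≤ k := by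
  have hbdd : BddAbove {z | ∃ a n, z = lzSize ((W.drop a).take n).reverse} := by
    refine ⟨W.length + 1, ?_⟩
    rintro _ ⟨a, n, rfl⟩
    refine (lzSize_le_length_add_one _).trans ?_
    simp only [List.length_reverse, List.length_take, List.length_drop]
    omega
  rw [maxRevLZ, csSup_le_iff hbdd ⟨_, 0, 0, rfl⟩]
  constructor
  · intro H U hU
    obtain ⟨a, n, rfl⟩ := exists_eq_take_drop_of_isInfix hU
    exact H _ ⟨a, n, rfl⟩
  · rintro H _ ⟨a, n, rfl⟩
    exact H _ ((List.take_prefix n _).isInfix.trans (List.drop_suffix a W).isInfix)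

lemma lzSize_reverse_le_maxRevLZ_of_isInfix {U W : List α} (h : U <:+: W) :
    lzSize U.reverse ≤ maxRevLZ W :=
  maxRevLZ_le_iff.1 le_rfl U h

lemma maxRevLZ_le_of_isInfix {U W : List α} (h : U <:+: W) : maxRevLZ U ≤ maxRevLZ W :=
  maxRevLZ_le_iff.2 fun _ hV => lzSize_reverse_le_maxRevLZ_of_isInfix (hV.trans h)

lemma isInfix_take_add_one {U X : List α} {n : ℕ} (h : U <:+: X.take (n + 1)) :
    U <:+: X.take n ∨ U <:+ X.take (n + 1) := by
  rw [List.take_add_one] at h ⊢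
  cases hx : X[n]? with
  | none => simp_all
  | some c => simpa [hx, or_comm] using List.infix_concat_iff.1 (by simpa [hx] using h)

lemma lzSize_reverse_take_add_one_le (X : List α) (n : ℕ) :
    lzSize (X.take (n + 1)).reverse ≤ lzSize (X.take n).reverse + 1 := by
  rw [List.take_add_one]
  cases X[n]? with
  | none => simp
  | some c => simpa using lzSize_cons_le c (X.take n).reverse

theorem maxRevLZ_take_add_one_le_iff {X : List α} {n k : ℕ} (h : maxRevLZ (X.take n) ≤ k) :
    maxRevLZ (X.take (n + 1)) ≤ k ↔ lzSize (X.take (n + 1)).reverse ≤ k := by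
  refine ⟨(lzSize_reverse_le_maxRevLZ_of_isInfix (List.infix_refl _)).trans, fun hk => ?_⟩
  refine maxRevLZ_le_iff.2 fun U hU => ?_
  rcases isInfix_take_add_one hU with hinf | hsuf
  · exact (lzSize_reverse_le_maxRevLZ_of_isInfix hinf).trans h
  · exact (lzSize_le_of_isPrefix (List.reverse_prefix.2 hsuf)).trans hk

theorem maxRevLZ_take_add_one_le {X : List α} {n k : ℕ} (h : maxRevLZ (X.take n) ≤ k) :
    maxRevLZ (X.take (n + 1)) ≤ k + 1 := by
  refine (maxRevLZ_take_add_one_le_iff (h.trans k.le_succ)).2 ?_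
  have := lzSize_reverse_le_maxRevLZ_of_isInfix (List.infix_refl (X.take n))
  have := lzSize_reverse_take_add_one_le X n
  omega

theorem maxRevLZ_extension_general (S : List α) (k : ℕ) (l r : ℕ)
    (h : maxRevLZ (frag S l (r - l)) ≤ k) :
    (maxRevLZ (frag S l (r - l + 1)) ≤ k ↔ lzSize (frag S l (r - l + 1)).reverse ≤ k) ∧
    maxRevLZ (frag S (l + 1) (r - l - 1)) ≤ k ∧
    maxRevLZ (frag S l (r - l + 1)) ≤ k + 1 :=
  ⟨maxRevLZ_take_add_one_le_iff h,
    (maxRevLZ_le_of_isInfix (frag_succ_sub_one_isInfix S l (r - l))).trans h,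
    maxRevLZ_take_add_one_le h⟩

/-- If the non-empty fragment `S[ℓ..r)` satisfies
`maxRevLZ(S[ℓ..r)) ≤ k` (`k > 0`, `r ≤ |S|`), then:
(a) `maxRevLZ(S[ℓ..r]) ≤ k ↔ |LZ(reverse(S[ℓ..r]))| ≤ k`;
(b) `maxRevLZ(S[ℓ+1..r)) ≤ k`; and
(c) `maxRevLZ(S[ℓ..r]) ≤ k + 1`. -/
theorem maxRevLZ_extension (S : List α) (k : ℕ) (hk : 0 < k) (l r : ℕ)
    (hl : 1 ≤ l) (hlr : l < r) (hr : r ≤ S.length)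
    (h : maxRevLZ (frag S l (r - l)) ≤ k) :
    (maxRevLZ (frag S l (r - l + 1)) ≤ k ↔ lzSize (frag S l (r - l + 1)).reverse ≤ k) ∧
    maxRevLZ (frag S (l + 1) (r - l - 1)) ≤ k ∧
    maxRevLZ (frag S l (r - l + 1)) ≤ k + 1 :=
  maxRevLZ_extension_general S k l r h
end
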